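/- Let Ω ⊂ ℝⁿ be a bounded open set, ε > 0, α ≥ 0, β > 0 with α + β = 1, and F a bounded function on the parabolic boundary strip Γ_p^ε that is Borel on each time slice. Consider the parabolic operator T defined by Tu(x,t) = (α/2){sup_{y ∈ B_ε(x)} u(y, t − ε²/2) + inf_{y ∈ B_ε(x)} u(y, t − ε²/2)} + β ⨍_{B_ε(x)} u(y, t − ε²/2) dy for (x,t) ∈ Ω × (0,∞), and Tu = u on Γ_p^ε. If u₀ has boundary values F, then the iterates u_{i+1} = T u_i stabilize in finitely many steps at each point: for every i, the values of u_{i+1} = T u_i can differ from those of u_i only for t > i ε²/2. Consequently the iteration converges pointwise, and the limit is the unique solution of the parabolic dynamic programming principle with boundary data F. -/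
import Mathlib


open MeasureTheory Metric Set Filter Classical

/-- The parabolic boundary strip Γ_p^ε. -/
def pBdry {n : ℕ} (Ω : Set (EuclideanSpace ℝ (Fin n))) (ε : ℝ) :
    Set (EuclideanSpace ℝ (Fin n) × ℝ) :=
  ({x | x ∉ Ω ∧ Metric.infDist x Ω ≤ ε} ×ˢ Ioi (-(ε ^ 2 / 2))) ∪
    (Ω ×ˢ Ioc (-(ε ^ 2 / 2)) 0)

/-- The parabolic DPP operator. -/
noncomputable def pT {n : ℕ} (Ω : Set (EuclideanSpace ℝ (Fin n))) (ε α β : ℝ)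
    (u : EuclideanSpace ℝ (Fin n) × ℝ → ℝ)
    (p : EuclideanSpace ℝ (Fin n) × ℝ) : ℝ :=
  if p.1 ∈ Ω ∧ 0 < p.2 then
    α / 2 * (sSup ((fun y => u (y, p.2 - ε ^ 2 / 2)) '' ball p.1 ε) +
        sInf ((fun y => u (y, p.2 - ε ^ 2 / 2)) '' ball p.1 ε)) +
      β * ⨍ y in ball p.1 ε, u (y, p.2 - ε ^ 2 / 2)
  else u p

/-- `u` satisfies the parabolic DPP with boundary data `F`. -/
def SatisfiesPDPP {n : ℕ} (Ω : Set (EuclideanSpace ℝ (Fin n))) (ε α β : ℝ)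
    (F u : EuclideanSpace ℝ (Fin n) × ℝ → ℝ) : Prop :=
  (∀ x ∈ Ω, ∀ t : ℝ, 0 < t →
    u (x, t) =
      α / 2 * (sSup ((fun y => u (y, t - ε ^ 2 / 2)) '' ball x ε) +
          sInf ((fun y => u (y, t - ε ^ 2 / 2)) '' ball x ε)) +
        β * ⨍ y in ball x ε, u (y, t - ε ^ 2 / 2)) ∧
  (∀ p ∈ pBdry Ω ε, u p = F p)

/-- The parabolic iteration stabilizes on each time slice after finitely many
steps; hence it converges pointwise to the unique solution of the parabolic
DPP with boundary data `F`. -/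
theorem parabolic_dpp_exists_unique {n : ℕ} (hn : 0 < n)
    (Ω : Set (EuclideanSpace ℝ (Fin n)))
    (hΩo : IsOpen Ω) (hΩb : Bornology.IsBounded Ω)
    (ε α β : ℝ) (hε : 0 < ε) (hα : 0 ≤ α) (hβ : 0 < β) (hαβ : α + β = 1)
    (F : EuclideanSpace ℝ (Fin n) × ℝ → ℝ)
    (CF : ℝ) (hFb : ∀ p, |F p| ≤ CF)
    (hFmeas : ∀ t : ℝ, Measurable fun x => F (x, t))
    (useq : ℕ → EuclideanSpace ℝ (Fin n) × ℝ → ℝ)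
    (h0bdry : ∀ p ∈ pBdry Ω ε, useq 0 p = F p)
    (h0meas : ∀ t : ℝ, Measurable fun x => useq 0 (x, t))
    (C₀ : ℝ) (h0b : ∀ p, |useq 0 p| ≤ C₀)
    (hiter : ∀ i, useq (i + 1) = pT Ω ε α β (useq i)) :
    (∀ i : ℕ, ∀ x : EuclideanSpace ℝ (Fin n), ∀ t : ℝ,
      t ≤ i * (ε ^ 2 / 2) → useq (i + 1) (x, t) = useq i (x, t)) ∧
    (∃ u : EuclideanSpace ℝ (Fin n) × ℝ → ℝ,
      (∀ p : EuclideanSpace ℝ (Fin n) × ℝ,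
        Tendsto (fun i => useq i p) atTop (nhds (u p))) ∧
      SatisfiesPDPP Ω ε α β F u ∧
      (∀ v : EuclideanSpace ℝ (Fin n) × ℝ → ℝ, SatisfiesPDPP Ω ε α β F v →
        ∀ p ∈ pBdry Ω ε ∪ Ω ×ˢ Ioi (0 : ℝ), v p = u p)) := by

  have hε2 : (0:ℝ) < ε ^ 2 / 2 := by positivity
  -- the stabilization index
  set K : ℝ → ℕ := fun t => ⌈t / (ε ^ 2 / 2)⌉₊ with hKdef
  have hKle : ∀ t : ℝ, t ≤ (K t : ℝ) * (ε ^ 2 / 2) := by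
    intro t
    have h1 : t / (ε ^ 2 / 2) ≤ (K t : ℝ) := Nat.le_ceil _
    have h2 := mul_le_mul_of_nonneg_right h1 hε2.le
    rwa [div_mul_cancel₀ _ hε2.ne'] at h2
  -- boundary points fail the interior condition of `pT`
  have hbcond : ∀ p ∈ pBdry Ω ε, ¬ (p.1 ∈ Ω ∧ 0 < p.2) := by
    rintro p (hp | hp) ⟨h1, h2⟩
    · exact hp.1.1 h1
    · exact absurd hp.2.2 (not_le.mpr h2)
  -- boundary values are preserved by every iterate
  have hbval : ∀ i : ℕ, ∀ p ∈ pBdry Ω ε, useq i p = F p := by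
    intro i
    induction i with
    | zero => exact h0bdry
    | succ i ih =>
      intro p hp
      rw [hiter i]
      unfold pT
      rw [if_neg (hbcond p hp)]
      exact ih p hp
  -- stabilization
  have hstab : ∀ i : ℕ, ∀ x : EuclideanSpace ℝ (Fin n), ∀ t : ℝ,
      t ≤ i * (ε ^ 2 / 2) → useq (i + 1) (x, t) = useq i (x, t) := by
    intro i
    induction i with
    | zero =>
      intro x t ht
      rw [hiter 0]
      unfold pT
      rw [if_neg]
      rintro ⟨-, h2⟩
      simp only [Nat.cast_zero, zero_mul] at ht
      exact absurd h2 (not_lt.mpr ht)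
    | succ i ih =>
      intro x t ht
      rw [hiter (i + 1)]
      unfold pT
      by_cases hc : x ∈ Ω ∧ 0 < t
      · rw [if_pos hc]
        have hslice : (fun y => useq (i + 1) (y, t - ε ^ 2 / 2))
            = fun y => useq i (y, t - ε ^ 2 / 2) := by
          funext y
          refine ih y _ ?_
          push_cast at ht ⊢
          linarith
        rw [hslice, hiter i]
        unfold pT
        rw [if_pos hc]
      · rw [if_neg hc]
  -- the sequence is eventually constant at each point
  have hstable : ∀ x : EuclideanSpace ℝ (Fin n), ∀ t : ℝ, ∀ i : ℕ, K t ≤ i →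
      useq i (x, t) = useq (K t) (x, t) := by
    intro x t i hi
    induction i with
    | zero =>
      have : K t = 0 := Nat.le_zero.mp hi
      rw [this]
    | succ i ih =>
      rcases Nat.eq_or_lt_of_le hi with h | h
      · rw [← h]
      · have hi' : K t ≤ i := Nat.lt_succ_iff.mp h
        have hti : t ≤ (i : ℝ) * (ε ^ 2 / 2) := by
          refine (hKle t).trans ?_
          exact mul_le_mul_of_nonneg_right (by exact_mod_cast hi') hε2.le
        rw [hstab i x t hti]
        exact ih hi'
  refine ⟨hstab, ?_⟩
  -- the limit function
  set u : EuclideanSpace ℝ (Fin n) × ℝ → ℝ := fun p => useq (K p.2) p with hudef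
  have hu_eq : ∀ x t i, K t ≤ i → useq i (x, t) = u (x, t) := fun x t i hi =>
    hstable x t i hi
  -- u satisfies the DPP equation
  have huDPP : ∀ x ∈ Ω, ∀ t : ℝ, 0 < t →
      u (x, t) =
        α / 2 * (sSup ((fun y => u (y, t - ε ^ 2 / 2)) '' ball x ε) +
            sInf ((fun y => u (y, t - ε ^ 2 / 2)) '' ball x ε)) +
          β * ⨍ y in ball x ε, u (y, t - ε ^ 2 / 2) := by
    intro x hx t ht
    set t' := t - ε ^ 2 / 2 with ht'
    set i := max (K t) (K t') with hi
    have h1 : u (x, t) = useq (i + 1) (x, t) :=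
      (hu_eq x t (i + 1) ((le_max_left _ _).trans (Nat.le_succ i))).symm
    have hslice : (fun y => useq i (y, t')) = fun y => u (y, t') := by
      funext y
      exact hu_eq y t' i (le_max_right _ _)
    rw [h1, hiter i]
    unfold pT
    rw [if_pos ⟨hx, ht⟩]
    rw [show (x, t).2 - ε ^ 2 / 2 = t' from rfl]
    rw [hslice]
  -- u has the right boundary values
  have hubdry : ∀ p ∈ pBdry Ω ε, u p = F p := fun p hp => hbval _ p hp
  refine ⟨u, ?_, ⟨huDPP, hubdry⟩, ?_⟩
  · -- pointwise convergence
    rintro ⟨x, t⟩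
    exact tendsto_atTop_of_eventually_const (i₀ := K t) fun i hi => hu_eq x t i hi
  · -- uniqueness
    intro v hv p hp
    -- main claim by induction on the number of time steps
    have main : ∀ m : ℕ, ∀ x ∈ Ω, ∀ t : ℝ, 0 < t → t ≤ (m : ℝ) * (ε ^ 2 / 2) →
        v (x, t) = u (x, t) := by
      intro m
      induction m with
      | zero =>
        intro x hx t ht hle
        simp only [Nat.cast_zero, zero_mul] at hle
        exact absurd ht (not_lt.mpr hle)
      | succ m ih =>
        intro x hx t ht hle
        set t' := t - ε ^ 2 / 2 with ht'
        have hslice : ∀ y ∈ ball x ε, v (y, t') = u (y, t') := by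
          intro y hy
          by_cases hyΩ : y ∈ Ω
          · by_cases ht'pos : 0 < t'
            · refine ih y hyΩ t' ht'pos ?_
              push_cast at hle ⊢
              rw [ht']
              linarith
            · have hmem : (y, t') ∈ pBdry Ω ε := by
                refine Or.inr ⟨hyΩ, ?_, not_lt.mp ht'pos⟩
                simp only [mem_Ioi]
                rw [ht']
                linarith
              rw [hv.2 _ hmem, hubdry _ hmem]
          · have hmem : (y, t') ∈ pBdry Ω ε := by
              refine Or.inl ⟨⟨hyΩ, ?_⟩, ?_⟩
              · exact (Metric.infDist_le_dist_of_mem hx).trans (mem_ball.mp hy).le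
              · simp only [mem_Ioi]
                rw [ht']
                linarith
            rw [hv.2 _ hmem, hubdry _ hmem]
        have himg : (fun y => v (y, t')) '' ball x ε = (fun y => u (y, t')) '' ball x ε :=
          Set.EqOn.image_eq hslice
        have hint : (⨍ y in ball x ε, v (y, t')) = ⨍ y in ball x ε, u (y, t') := by
          rw [setAverage_eq, setAverage_eq,
            setIntegral_congr_fun measurableSet_ball hslice]
        rw [hv.1 x hx t ht, huDPP x hx t ht, ← ht', himg, hint]
    rcases hp with hp | hp
    · rw [hv.2 p hp, hubdry p hp]
    · obtain ⟨x, t⟩ := p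
      exact main (K t) x hp.1 t hp.2 (hKle t)
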